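/- In any algebra (S,*,') satisfying the three axioms, the identity x'' = (x'' * x') * x holds for all x in S. -/

import Mathlib

/-! Writing `*` for `m` and `'` for `i`: evaluating `(x' * (x'' * x''')) * x` once by (E3) and (E1)
for `x''`, once by (E3) and (E1) for `x'`, gives `x' * x'' = x' * x`. With this identity and (E3),
`x''` expands by (E1) to `(x'' * x') * x''`, which re-associates to `(x'' * x') * x`. -/

section

variable {S : Type*} {m : S → S → S} {i : S → S}

theorem inv_mul_inv_inv_eq_inv_mul (E1 : ∀ x, m (m x (i x)) x = x)
    (E3 : ∀ x y z, m (m x y) z = m x (m y (i (i z)))) (x : S) :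
    m (i x) (i (i x)) = m (i x) x :=
  calc m (i x) (i (i x))
      = m (m (i x) (m (i (i x)) (i (i (i x))))) x := by rw [E3, E1]
    _ = m (i x) x := by rw [← E3, E1]

theorem inv_mul_mul_inv_eq_inv_mul_inv_inv_mul_inv (E1 : ∀ x, m (m x (i x)) x = x)
    (E3 : ∀ x y z, m (m x y) z = m x (m y (i (i z)))) (x : S) :
    m (m (i x) x) (i x) = m (i x) (m (i (i x)) (i x)) := by
  rw [← inv_mul_inv_inv_eq_inv_mul E1 E3 x, E3, inv_mul_inv_inv_eq_inv_mul E1 E3 (i x)]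

end

theorem stmt_general (S : Type*) (m : S → S → S) (i : S → S)
    (E1 : ∀ x, m (m x (i x)) x = x)
    (E3 : ∀ x y z, m (m x y) z = m x (m y (i (i z)))) :
    ∀ x, i (i x) = m (m (i (i x)) (i x)) x := by
  intro x
  calc i (i x)
      = m (m (i (i x)) (i (i (i x)))) (i (i x)) := (E1 (i (i x))).symm
    _ = m (m (i (i x)) (i x)) (i (i x)) := by rw [inv_mul_inv_inv_eq_inv_mul E1 E3 (i x)]
    _ = m (i (i x)) (m (i (i (i x))) (i (i x))) := inv_mul_mul_inv_eq_inv_mul_inv_inv_mul_inv E1 E3 (i x)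
    _ = m (m (i (i x)) (i (i (i x)))) x := (E3 _ _ x).symm
    _ = m (m (i (i x)) (i x)) x := by rw [inv_mul_inv_inv_eq_inv_mul E1 E3 (i x)]

theorem stmt (S : Type*) (m : S → S → S) (i : S → S)
    (E1 : ∀ x, m (m x (i x)) x = x)
    (E2 : ∀ x y, m (m x (i x)) (m (i y) y) = m (m (i y) y) (m x (i x)))
    (E3 : ∀ x y z, m (m x y) z = m x (m y (i (i z)))) :
    ∀ x, i (i x) = m (m (i (i x)) (i x)) x :=
  stmt_general S m i E1 E3
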